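/- Let X : [0,1] → ℝ be a continuous nonnegative function with X(0) = X(1) = 0, and define m_X(s,t) = inf_{u ∈ [min(s,t), max(s,t)]} X(u). Then the kernel K(s,t) = m_X(s,t) is symmetric and positive semidefinite on [0,1] × [0,1]: for all n, all t_1, ..., t_n ∈ [0,1], and all real c_1, ..., c_n, Σ_{i,j} c_i c_j m_X(t_i, t_j) ≥ 0. -/

import Mathlib

/-!
Writing `K i j = m_X(t_i, t_j)`, the running infimum satisfies `min (K i k) (K k j) ≤ K i j`,
because the interval between `t_i` and `t_j` is covered by the two intervals through `t_k`.
Since `K i j = ∫₀^∞ 1{r ≤ K i j} dr` (layer cake), it suffices that each level kernel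
`1{r ≤ K i j}` is positive semidefinite. That inequality makes `r ≤ K i j` a symmetric and
transitive relation, and the quadratic form of such a relation is the sum of the squares of the
sums of the coefficients `c i` over its classes.
-/

open Set

/-- The running-infimum kernel `m_X(s,t) = inf_{u between s and t} X(u)`. -/
noncomputable def infKernel (X : ℝ → ℝ) (s t : ℝ) : ℝ :=
  sInf (X '' Set.uIcc s t)

open MeasureTheory

section Kernel

variable {ι : Type*}

theorem sum_sum_ite_nonneg_of_symm_of_trans {R : ι → ι → Prop} [DecidableRel R]
    (hsymm : ∀ i j, R i j → R j i) (htrans : ∀ i j k, R i j → R j k → R i k)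
    (c : ι → ℝ) (s : Finset ι) :
    0 ≤ ∑ i ∈ s, ∑ j ∈ s, if R i j then c i * c j else 0 := by
  induction s using Finset.strongInduction with
  | H s ih =>
  by_cases hdom : ∃ i ∈ s, R i i
  · obtain ⟨i, hi, hii⟩ := hdom
    have hcross : ∀ j ∈ s.filter (R i), ∀ k ∈ s.filter (¬ R i ·), ¬ R j k ∧ ¬ R k j := by
      intro j hj k hk
      simp only [Finset.mem_filter] at hj hk
      exact ⟨fun hjk => hk.2 (htrans _ _ _ hj.2 hjk),
        fun hkj => hk.2 (htrans _ _ _ hj.2 (hsymm _ _ hkj))⟩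
    have hclass : ∑ j ∈ s.filter (R i), ∑ k ∈ s.filter (R i), (if R j k then c j * c k else 0)
        = (∑ j ∈ s.filter (R i), c j) ^ 2 := by
      rw [sq, Finset.sum_mul_sum]
      refine Finset.sum_congr rfl fun j hj => Finset.sum_congr rfl fun k hk => ?_
      simp only [Finset.mem_filter] at hj hk
      exact if_pos (htrans _ _ _ (hsymm _ _ hj.2) hk.2)
    have hrest : s.filter (¬ R i ·) ⊂ s := Finset.filter_ssubset.2 ⟨i, hi, not_not.2 hii⟩
    calc (0 : ℝ) ≤ (∑ j ∈ s.filter (R i), c j) ^ 2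
          + ∑ j ∈ s.filter (¬ R i ·), ∑ k ∈ s.filter (¬ R i ·), (if R j k then c j * c k else 0) :=
          add_nonneg (sq_nonneg _) (ih _ hrest)
      _ = ∑ j ∈ s, ∑ k ∈ s, if R j k then c j * c k else 0 := by
          rw [← hclass, ← Finset.sum_filter_add_sum_filter_not s (R i)]
          congr 1 <;> refine Finset.sum_congr rfl fun j hj => ?_ <;>
            rw [← Finset.sum_filter_add_sum_filter_not s (R i)]
          · rw [Finset.sum_eq_zero fun k hk => if_neg (hcross j hj k hk).1, add_zero]
          · rw [Finset.sum_eq_zero fun k hk => if_neg (hcross k hk j hj).2, zero_add]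
  · push Not at hdom
    refine (Finset.sum_eq_zero fun j hj => Finset.sum_eq_zero fun k _ => ?_).ge
    exact if_neg fun hjk => hdom j hj (htrans _ _ _ hjk (hsymm _ _ hjk))

theorem integrableOn_Ioi_indicator_Iic_one (a : ℝ) :
    IntegrableOn ((Iic a).indicator (1 : ℝ → ℝ)) (Ioi 0) :=
  (integrable_indicator_iff measurableSet_Iic).2 <| integrableOn_const <| by
    rw [Measure.restrict_apply measurableSet_Iic, Iic_inter_Ioi]
    exact measure_Ioc_lt_top.ne

theorem setIntegral_Ioi_indicator_Iic_one {a : ℝ} (ha : 0 ≤ a) :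
    ∫ r in Ioi 0, (Iic a).indicator 1 r = a := by
  rw [integral_indicator_one measurableSet_Iic, measureReal_restrict_apply measurableSet_Iic,
    Iic_inter_Ioi, Real.volume_real_Ioc_of_le ha, sub_zero]

theorem sum_sum_mul_nonneg_of_min_le [Fintype ι] {K : ι → ι → ℝ}
    (hsymm : ∀ i j, K i j = K j i) (hnonneg : ∀ i j, 0 ≤ K i j)
    (hmin : ∀ i j k, min (K i k) (K k j) ≤ K i j) (c : ι → ℝ) :
    0 ≤ ∑ i, ∑ j, c i * c j * K i j := by
  have hint : ∀ i j, IntegrableOn (fun r => c i * c j * (Iic (K i j)).indicator 1 r) (Ioi 0) :=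
    fun i j => (integrableOn_Ioi_indicator_Iic_one (K i j)).const_mul _
  calc (0 : ℝ) ≤ ∫ r in Ioi 0, ∑ i, ∑ j, c i * c j * (Iic (K i j)).indicator 1 r := by
        refine integral_nonneg fun r => ?_
        simpa [indicator_apply, ← ite_mul] using sum_sum_ite_nonneg_of_symm_of_trans
          (R := fun i j => r ≤ K i j) (fun i j h => h.trans_eq (hsymm i j))
          (fun i k j hik hkj => (le_min hik hkj).trans (hmin i j k)) c Finset.univ
    _ = ∑ i, ∑ j, c i * c j * K i j := by
        rw [integral_finsetSum _ fun i _ => integrable_finsetSum _ fun j _ => hint i j]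
        refine Finset.sum_congr rfl fun i _ => ?_
        rw [integral_finsetSum _ fun j _ => hint i j]
        refine Finset.sum_congr rfl fun j _ => ?_
        rw [integral_const_mul, setIntegral_Ioi_indicator_Iic_one (hnonneg i j)]

end Kernel

theorem infKernel_comm (X : ℝ → ℝ) (s t : ℝ) : infKernel X s t = infKernel X t s := by
  rw [infKernel, infKernel, uIcc_comm]

theorem infKernel_nonneg {X : ℝ → ℝ} {s t : ℝ} (hX : ∀ u ∈ uIcc s t, 0 ≤ X u) :
    0 ≤ infKernel X s t :=
  Real.sInf_nonneg (forall_mem_image.2 hX)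

theorem min_infKernel_le {X : ℝ → ℝ} {s t u : ℝ} (hsu : BddBelow (X '' uIcc s u))
    (hut : BddBelow (X '' uIcc u t)) :
    min (infKernel X s u) (infKernel X u t) ≤ infKernel X s t := by
  refine le_csInf (nonempty_uIcc.image X) (forall_mem_image.2 fun v hv => ?_)
  rcases uIcc_subset_uIcc_union_uIcc hv with h | h
  · exact (min_le_left _ _).trans (csInf_le hsu (mem_image_of_mem X h))
  · exact (min_le_right _ _).trans (csInf_le hut (mem_image_of_mem X h))

theorem infKernel_posSemidef_general
    (X : ℝ → ℝ)
    (hXnn : ∀ u ∈ Set.Icc (0:ℝ) 1, 0 ≤ X u) :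
    (∀ s t : ℝ, infKernel X s t = infKernel X t s) ∧
    (∀ (n : ℕ) (t : Fin n → ℝ), (∀ i, t i ∈ Set.Icc (0:ℝ) 1) →
      ∀ c : Fin n → ℝ,
        0 ≤ ∑ i : Fin n, ∑ j : Fin n, c i * c j * infKernel X (t i) (t j)) := by
  refine ⟨infKernel_comm X, fun n t ht c => ?_⟩
  have hnonneg : ∀ i j, ∀ u ∈ uIcc (t i) (t j), 0 ≤ X u := fun i j u hu =>
    hXnn u (uIcc_subset_Icc (ht i) (ht j) hu)
  have hbdd : ∀ i j, BddBelow (X '' uIcc (t i) (t j)) := fun i j =>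
    ⟨0, forall_mem_image.2 (hnonneg i j)⟩
  exact sum_sum_mul_nonneg_of_min_le (fun i j => infKernel_comm X (t i) (t j))
    (fun i j => infKernel_nonneg (hnonneg i j))
    (fun i j k => min_infKernel_le (hbdd i k) (hbdd k j)) c

/-- **Positive semidefiniteness of the running-infimum kernel.** For a
continuous nonnegative `X : [0,1] → ℝ` with `X(0) = X(1) = 0`, the kernel
`m_X(s,t)` is symmetric and positive semidefinite on `[0,1] × [0,1]`. -/
theorem infKernel_posSemidef
    (X : ℝ → ℝ) (hX : ContinuousOn X (Set.Icc 0 1))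
    (hXnn : ∀ u ∈ Set.Icc (0:ℝ) 1, 0 ≤ X u)
    (hX0 : X 0 = 0) (hX1 : X 1 = 0) :
    (∀ s t : ℝ, infKernel X s t = infKernel X t s) ∧
    (∀ (n : ℕ) (t : Fin n → ℝ), (∀ i, t i ∈ Set.Icc (0:ℝ) 1) →
      ∀ c : Fin n → ℝ,
        0 ≤ ∑ i : Fin n, ∑ j : Fin n, c i * c j * infKernel X (t i) (t j)) :=
  infKernel_posSemidef_general X hXnn
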